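/- arXiv:0911.2323 — 5 statements merged into one kernel-verified Lean document; each statement's English description precedes it below -/
import Mathlib

section
/- Every typable term has a well-formed type: if ⊢ T : (P,R) is derivable from the empty (well-formed) basis, then (P,R) is a well-formed type. -/
/-- CLS sequences over an alphabet `El`. -/
inductive CLSSeq (El : Type) : Type where
  | eps : CLSSeq El
  | elem : El → CLSSeq El
  | cat : CLSSeq El → CLSSeq El → CLSSeq El

/-- CLS terms over an alphabet `El`. -/
inductive CLSTerm (El : Type) : Type where
  | seq : CLSSeq El → CLSTerm El
  | loop : CLSSeq El → CLSTerm El → CLSTerm El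
  | par : CLSTerm El → CLSTerm El → CLSTerm El
/-- Excluded basic types of a set of present basic types. -/
def excl {BT : Type} (Exc : BT → Set BT) (P : Set BT) : Set BT := ⋃ t ∈ P, Exc t

/-- A type `(P,R)` is well formed. -/
def WF {BT : Type} (Exc : BT → Set BT) (ty : Set BT × Set BT) : Prop :=
  ty.1 ∩ excl Exc ty.1 = ∅ ∧ ty.1 ∩ ty.2 = ∅ ∧ ty.2 ∩ excl Exc ty.1 = ∅

/-- Compatibility of types. -/
def Compat {BT : Type} (Exc : BT → Set BT) (ty ty' : Set BT × Set BT) : Prop :=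
  excl Exc ty.1 ∩ ty'.1 = ∅ ∧ excl Exc ty.1 ∩ ty'.2 = ∅ ∧
  excl Exc ty'.1 ∩ ty.1 = ∅ ∧ excl Exc ty'.1 ∩ ty.2 = ∅

/-- Conjunction of compatible types. -/
def conj {BT : Type} (ty ty' : Set BT × Set BT) : Set BT × Set BT :=
  (ty.1 ∪ ty'.1, (ty.2 ∪ ty'.2) \ (ty.1 ∪ ty'.1))
/-- Typing judgment for CLS sequences. -/
inductive SeqTy {El BT : Type} (Γ : El → BT) (Req Exc : BT → Set BT) :
    CLSSeq El → Set BT × Set BT → Prop where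
  | eps : SeqTy Γ Req Exc .eps (∅, ∅)
  | elem (a : El) : SeqTy Γ Req Exc (.elem a) ({Γ a}, Req (Γ a))
  | cat : SeqTy Γ Req Exc s₁ ty₁ → SeqTy Γ Req Exc s₂ ty₂ → Compat Exc ty₁ ty₂ →
      SeqTy Γ Req Exc (.cat s₁ s₂) (conj ty₁ ty₂)

/-- Typing judgment for CLS terms. -/
inductive TermTy {El BT : Type} (Γ : El → BT) (Req Exc : BT → Set BT) :
    CLSTerm El → Set BT × Set BT → Prop where
  | seq : SeqTy Γ Req Exc s ty → TermTy Γ Req Exc (.seq s) ty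
  | par : TermTy Γ Req Exc t₁ ty₁ → TermTy Γ Req Exc t₂ ty₂ → Compat Exc ty₁ ty₂ →
      TermTy Γ Req Exc (.par t₁ t₂) (conj ty₁ ty₂)
  | loop : SeqTy Γ Req Exc s ty → TermTy Γ Req Exc t ty' → Compat Exc ty ty' →
      ty'.2 ⊆ ty.1 → TermTy Γ Req Exc (.loop s t) (ty.1, ty.2 \ ty'.1)


lemma excl_union {BT : Type} (Exc : BT → Set BT) (P Q : Set BT) :
    excl Exc (P ∪ Q) = excl Exc P ∪ excl Exc Q :=
  Set.biUnion_union P Q _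

lemma conj_WF {BT : Type} (Exc : BT → Set BT) {ty ty' : Set BT × Set BT}
    (h1 : WF Exc ty) (h2 : WF Exc ty') (hc : Compat Exc ty ty') :
    WF Exc (conj ty ty') := by
  obtain ⟨a1, b1, c1⟩ := h1
  obtain ⟨a2, b2, c2⟩ := h2
  obtain ⟨d1, d2, d3, d4⟩ := hc
  refine ⟨?_, ?_, ?_⟩
  · show (ty.1 ∪ ty'.1) ∩ excl Exc (ty.1 ∪ ty'.1) = ∅
    rw [excl_union]
    rw [Set.eq_empty_iff_forall_notMem] at *
    rintro x ⟨hx | hx, he | he⟩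
    · exact a1 x ⟨hx, he⟩
    · exact d3 x ⟨he, hx⟩
    · exact d1 x ⟨he, hx⟩
    · exact a2 x ⟨hx, he⟩
  · show (ty.1 ∪ ty'.1) ∩ ((ty.2 ∪ ty'.2) \ (ty.1 ∪ ty'.1)) = ∅
    rw [Set.eq_empty_iff_forall_notMem]
    rintro x ⟨hx, _, hn⟩
    exact hn hx
  · show ((ty.2 ∪ ty'.2) \ (ty.1 ∪ ty'.1)) ∩ excl Exc (ty.1 ∪ ty'.1) = ∅
    rw [excl_union]
    rw [Set.eq_empty_iff_forall_notMem] at *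
    rintro x ⟨⟨hx | hx, _⟩, he | he⟩
    · exact c1 x ⟨hx, he⟩
    · exact d4 x ⟨he, hx⟩
    · exact d2 x ⟨he, hx⟩
    · exact c2 x ⟨hx, he⟩

lemma seqTy_WF {El BT : Type} (Γ : El → BT) (Req Exc : BT → Set BT)
    (hRE : ∀ t : BT, t ∉ Req t ∪ Exc t ∧ Req t ∩ Exc t = ∅)
    {s : CLSSeq El} {ty : Set BT × Set BT}
    (h : SeqTy Γ Req Exc s ty) : WF Exc ty := by
  induction h with
  | eps => refine ⟨?_, ?_, ?_⟩ <;> simp [excl]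
  | elem a =>
      obtain ⟨hne, hint⟩ := hRE (Γ a)
      simp only [Set.mem_union, not_or] at hne
      refine ⟨?_, ?_, ?_⟩
      · show {Γ a} ∩ excl Exc {Γ a} = ∅
        simp [excl, Set.eq_empty_iff_forall_notMem, hne.2]
      · show {Γ a} ∩ Req (Γ a) = ∅
        rw [Set.eq_empty_iff_forall_notMem]
        rintro x ⟨hx, hm⟩
        exact hne.1 (hx ▸ hm)
      · show Req (Γ a) ∩ excl Exc {Γ a} = ∅
        simpa [excl] using hint
  | cat h1 h2 hc ih1 ih2 => exact conj_WF Exc ih1 ih2 hc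

/-- every typable term has a well-formed type. -/
theorem typable_wellFormed {El BT : Type} (Γ : El → BT) (Req Exc : BT → Set BT)
    (hRE : ∀ t : BT, t ∉ Req t ∪ Exc t ∧ Req t ∩ Exc t = ∅)
    (T : CLSTerm El) (ty : Set BT × Set BT)
    (h : TermTy Γ Req Exc T ty) : WF Exc ty := by
  induction h with
  | seq hs => exact seqTy_WF Γ Req Exc hRE hs
  | par h1 h2 hc ih1 ih2 => exact conj_WF Exc ih1 ih2 hc
  | loop hs ht hc hsub ih =>
      obtain ⟨a1, b1, c1⟩ := seqTy_WF Γ Req Exc hRE hs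
      refine ⟨a1, ?_, ?_⟩
      · rw [Set.eq_empty_iff_forall_notMem] at b1 ⊢
        rintro x ⟨hx, hy, _⟩; exact b1 x ⟨hx, hy⟩
      · rw [Set.eq_empty_iff_forall_notMem] at c1 ⊢
        rintro x ⟨⟨hx, _⟩, he⟩; exact c1 x ⟨hx, he⟩
end

section
/- Soundness of type inference: if the principal-typing judgment P ⊳ Θ; (Φ,Ψ); Ξ is derivable and m is a type mapping satisfying all constraints in Ξ, then m(Θ) ⊢ P : (m(Φ), m(Ψ)) in the ordinary typing system. -/
/-- CLS sequence patterns: sequences with sequence variables and element variables. -/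
inductive SPat (El : Type) : Type where
  | eps : SPat El
  | elem : El → SPat El
  | cat : SPat El → SPat El → SPat El
  | svar : ℕ → SPat El
  | evar : ℕ → SPat El

/-- CLS patterns: terms with term variables (and sequence/element variables). -/
inductive Pat (El : Type) : Type where
  | sp : SPat El → Pat El
  | loop : SPat El → Pat El → Pat El
  | par : Pat El → Pat El → Pat El
  | tvar : ℕ → Pat El

/-- An instantiation of variables. -/
structure Inst (El : Type) where
  tv : ℕ → CLSTerm El
  sv : ℕ → CLSSeq El
  ev : ℕ → El

def applyS {El : Type} (σ : Inst El) : SPat El → CLSSeq El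
  | .eps => .eps
  | .elem a => .elem a
  | .cat s₁ s₂ => .cat (applyS σ s₁) (applyS σ s₂)
  | .svar x => σ.sv x
  | .evar x => .elem (σ.ev x)

def applyP {El : Type} (σ : Inst El) : Pat El → CLSTerm El
  | .sp s => .seq (applyS σ s)
  | .loop s p => .loop (applyS σ s) (applyP σ p)
  | .par p₁ p₂ => .par (applyP σ p₁) (applyP σ p₂)
  | .tvar X => σ.tv X

/-- A basis assigns types to variables. -/
structure CLSBasis (BT : Type) where
  tv : ℕ → Set BT × Set BT
  sv : ℕ → Set BT × Set BT
  ev : ℕ → BT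

/-- Typing judgment for sequence patterns. -/
inductive SPatTy {El BT : Type} (Γ : El → BT) (Req Exc : BT → Set BT) (Δ : CLSBasis BT) :
    SPat El → Set BT × Set BT → Prop where
  | eps : SPatTy Γ Req Exc Δ .eps (∅, ∅)
  | elem (a : El) : SPatTy Γ Req Exc Δ (.elem a) ({Γ a}, Req (Γ a))
  | cat : SPatTy Γ Req Exc Δ s₁ ty₁ → SPatTy Γ Req Exc Δ s₂ ty₂ → Compat Exc ty₁ ty₂ →
      SPatTy Γ Req Exc Δ (.cat s₁ s₂) (conj ty₁ ty₂)
  | svar (x : ℕ) : SPatTy Γ Req Exc Δ (.svar x) (Δ.sv x)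
  | evar (x : ℕ) : SPatTy Γ Req Exc Δ (.evar x) ({Δ.ev x}, Req (Δ.ev x))

/-- Typing judgment for patterns. -/
inductive PatTy {El BT : Type} (Γ : El → BT) (Req Exc : BT → Set BT) (Δ : CLSBasis BT) :
    Pat El → Set BT × Set BT → Prop where
  | sp : SPatTy Γ Req Exc Δ s ty → PatTy Γ Req Exc Δ (.sp s) ty
  | par : PatTy Γ Req Exc Δ p₁ ty₁ → PatTy Γ Req Exc Δ p₂ ty₂ → Compat Exc ty₁ ty₂ →
      PatTy Γ Req Exc Δ (.par p₁ p₂) (conj ty₁ ty₂)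
  | loop : SPatTy Γ Req Exc Δ s ty → PatTy Γ Req Exc Δ p ty' → Compat Exc ty ty' →
      ty'.2 ⊆ ty.1 → PatTy Γ Req Exc Δ (.loop s p) (ty.1, ty.2 \ ty'.1)
  | tvar (X : ℕ) : PatTy Γ Req Exc Δ (.tvar X) (Δ.tv X)

/-- An instantiation agrees with a basis. -/
def Agrees {El BT : Type} (Γ : El → BT) (Req Exc : BT → Set BT)
    (σ : Inst El) (Δ : CLSBasis BT) : Prop :=
  (∀ X, TermTy Γ Req Exc (σ.tv X) (Δ.tv X)) ∧
  (∀ x, SeqTy Γ Req Exc (σ.sv x) (Δ.sv x)) ∧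
  (∀ x, Γ (σ.ev x) = Δ.ev x)
/-- Formal set expressions over basic types and type variables. -/
inductive TE (BT : Type) : Type where
  | const : Set BT → TE BT
  | evar : ℕ → TE BT            -- e-type variable φ_x (as a singleton set)
  | reqOf : ℕ → TE BT           -- the required set R_{φ_x}
  | pvarS : ℕ → TE BT           -- p-type variable of a sequence variable
  | rvarS : ℕ → TE BT           -- r-type variable of a sequence variable
  | pvarT : ℕ → TE BT           -- p-type variable of a term variable
  | rvarT : ℕ → TE BT           -- r-type variable of a term variable
  | union : TE BT → TE BT → TE BT
  | diff : TE BT → TE BT → TE BT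

/-- A type mapping: values for the e-, p- and r-type variables. -/
structure TMap (BT : Type) where
  ev : ℕ → BT
  pS : ℕ → Set BT
  rS : ℕ → Set BT
  pT : ℕ → Set BT
  rT : ℕ → Set BT

def TE.eval {BT : Type} (Req : BT → Set BT) (m : TMap BT) : TE BT → Set BT
  | .const s => s
  | .evar x => {m.ev x}
  | .reqOf x => Req (m.ev x)
  | .pvarS x => m.pS x
  | .rvarS x => m.rS x
  | .pvarT X => m.pT X
  | .rvarT X => m.rT X
  | .union e₁ e₂ => e₁.eval Req m ∪ e₂.eval Req m
  | .diff e₁ e₂ => e₁.eval Req m \ e₂.eval Req m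

/-- Constraints produced by type inference. -/
inductive Constr (BT : Type) : Type where
  | ok : TE BT × TE BT → TE BT × TE BT → Constr BT
  | subset : TE BT → TE BT → Constr BT

/-- Satisfaction of a constraint by a type mapping. -/
def Satisfies {BT : Type} (Req Exc : BT → Set BT) (m : TMap BT) : Constr BT → Prop
  | .ok ty ty' =>
      Compat Exc (ty.1.eval Req m, ty.2.eval Req m) (ty'.1.eval Req m, ty'.2.eval Req m)
  | .subset e₁ e₂ => e₁.eval Req m ⊆ e₂.eval Req m

/-- Formal conjunction of formal types. -/
def fconj {BT : Type} (ty ty' : TE BT × TE BT) : TE BT × TE BT :=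
  (.union ty.1 ty'.1, .diff (.union ty.2 ty'.2) (.union ty.1 ty'.1))

/-- Principal-typing inference for sequence patterns. -/
inductive SInf {El BT : Type} (Γ : El → BT) (Req : BT → Set BT) :
    SPat El → TE BT × TE BT → List (Constr BT) → Prop where
  | eps : SInf Γ Req .eps (.const ∅, .const ∅) []
  | elem (a : El) : SInf Γ Req (.elem a) (.const {Γ a}, .const (Req (Γ a))) []
  | evar (x : ℕ) : SInf Γ Req (.evar x) (.evar x, .reqOf x) []
  | svar (x : ℕ) : SInf Γ Req (.svar x) (.pvarS x, .rvarS x) []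
  | cat : SInf Γ Req s₁ ty₁ Ξ₁ → SInf Γ Req s₂ ty₂ Ξ₂ →
      SInf Γ Req (.cat s₁ s₂) (fconj ty₁ ty₂) (.ok ty₁ ty₂ :: (Ξ₁ ++ Ξ₂))

/-- Principal-typing inference for patterns. -/
inductive PInf {El BT : Type} (Γ : El → BT) (Req : BT → Set BT) :
    Pat El → TE BT × TE BT → List (Constr BT) → Prop where
  | sp : SInf Γ Req s ty Ξ → PInf Γ Req (.sp s) ty Ξ
  | tvar (X : ℕ) : PInf Γ Req (.tvar X) (.pvarT X, .rvarT X) []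
  | par : PInf Γ Req p₁ ty₁ Ξ₁ → PInf Γ Req p₂ ty₂ Ξ₂ →
      PInf Γ Req (.par p₁ p₂) (fconj ty₁ ty₂) (.ok ty₁ ty₂ :: (Ξ₁ ++ Ξ₂))
  | loop : SInf Γ Req s ty Ξ → PInf Γ Req p ty' Ξ' →
      PInf Γ Req (.loop s p) (ty.1, .diff ty.2 ty'.1)
        (.ok ty ty' :: .subset ty'.2 ty.1 :: (Ξ ++ Ξ'))

/-- The basis `m(Θ)` induced by a type mapping on the canonical principal basis. -/
def basisOf {BT : Type} (m : TMap BT) : CLSBasis BT :=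
  ⟨fun X => (m.pT X, m.rT X), fun x => (m.pS x, m.rS x), m.ev⟩

theorem SInf.sound {El BT : Type} {Γ : El → BT} {Req : BT → Set BT} (Exc : BT → Set BT)
    (m : TMap BT) {s : SPat El} {ty : TE BT × TE BT} {Ξ : List (Constr BT)}
    (hinf : SInf Γ Req s ty Ξ) (hsat : ∀ c ∈ Ξ, Satisfies Req Exc m c) :
    SPatTy Γ Req Exc (basisOf m) s (ty.1.eval Req m, ty.2.eval Req m) := by
  induction hinf with
  | eps => exact .eps
  | elem a => exact .elem a
  | evar x => exact .evar x
  | svar x => exact .svar x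
  | cat _ _ ih₁ ih₂ =>
    simp only [List.forall_mem_cons, List.forall_mem_append] at hsat
    obtain ⟨hok, hsat₁, hsat₂⟩ := hsat
    exact .cat (ih₁ hsat₁) (ih₂ hsat₂) hok

theorem PInf.sound {El BT : Type} {Γ : El → BT} {Req : BT → Set BT} (Exc : BT → Set BT)
    (m : TMap BT) {p : Pat El} {ty : TE BT × TE BT} {Ξ : List (Constr BT)}
    (hinf : PInf Γ Req p ty Ξ) (hsat : ∀ c ∈ Ξ, Satisfies Req Exc m c) :
    PatTy Γ Req Exc (basisOf m) p (ty.1.eval Req m, ty.2.eval Req m) := by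
  induction hinf with
  | sp hs => exact .sp (hs.sound Exc m hsat)
  | tvar X => exact .tvar X
  | par _ _ ih₁ ih₂ =>
    simp only [List.forall_mem_cons, List.forall_mem_append] at hsat
    obtain ⟨hok, hsat₁, hsat₂⟩ := hsat
    exact .par (ih₁ hsat₁) (ih₂ hsat₂) hok
  | loop hs _ ih =>
    simp only [List.forall_mem_cons, List.forall_mem_append] at hsat
    obtain ⟨hok, hsub, hsatₛ, hsatₚ⟩ := hsat
    exact .loop (hs.sound Exc m hsatₛ) (ih hsatₚ) hok hsub

/-- soundness of type inference. -/
theorem inference_sound {El BT : Type} (Γ : El → BT) (Req Exc : BT → Set BT)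
    (p : Pat El) (Φ Ψ : TE BT) (Ξ : List (Constr BT)) (m : TMap BT)
    (hinf : PInf Γ Req p (Φ, Ψ) Ξ)
    (hsat : ∀ c ∈ Ξ, Satisfies Req Exc m c) :
    PatTy Γ Req Exc (basisOf m) p (Φ.eval Req m, Ψ.eval Req m) :=
  hinf.sound Exc m hsat
end

section
/- Completeness of type inference: if Δ ⊢ P : (P,R) in the ordinary typing system, then there exist Θ, (Φ,Ψ), Ξ with P ⊳ Θ; (Φ,Ψ); Ξ, and a type mapping m satisfying Ξ such that m(Θ) ⊆ Δ, m(Φ) = P, and m(Ψ) = R. -/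
/-- Sequence variables occurring in a sequence pattern. -/
def SPat.freeSV {El : Type} : SPat El → Set ℕ
  | .eps => ∅ | .elem _ => ∅ | .cat s₁ s₂ => s₁.freeSV ∪ s₂.freeSV
  | .svar x => {x} | .evar _ => ∅

/-- Element variables occurring in a sequence pattern. -/
def SPat.freeEV {El : Type} : SPat El → Set ℕ
  | .eps => ∅ | .elem _ => ∅ | .cat s₁ s₂ => s₁.freeEV ∪ s₂.freeEV
  | .svar _ => ∅ | .evar x => {x}

/-- Term variables occurring in a pattern. -/
def Pat.freeTV {El : Type} : Pat El → Set ℕ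
  | .sp _ => ∅ | .loop _ p => p.freeTV | .par p₁ p₂ => p₁.freeTV ∪ p₂.freeTV
  | .tvar X => {X}

/-- Sequence variables occurring in a pattern. -/
def Pat.freeSV {El : Type} : Pat El → Set ℕ
  | .sp s => s.freeSV | .loop s p => s.freeSV ∪ p.freeSV
  | .par p₁ p₂ => p₁.freeSV ∪ p₂.freeSV | .tvar _ => ∅

/-- Element variables occurring in a pattern. -/
def Pat.freeEV {El : Type} : Pat El → Set ℕ
  | .sp s => s.freeEV | .loop s p => s.freeEV ∪ p.freeEV
  | .par p₁ p₂ => p₁.freeEV ∪ p₂.freeEV | .tvar _ => ∅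

/-- `m(Θ) ⊆ Δ`: the basis `Δ` extends the basis induced by `m` on the
(canonical) principal basis of `p`, i.e. they agree on the variables of `p`. -/
def ExtendsOn {El BT : Type} (m : TMap BT) (Δ : CLSBasis BT) (p : Pat El) : Prop :=
  (∀ X ∈ p.freeTV, Δ.tv X = (m.pT X, m.rT X)) ∧
  (∀ x ∈ p.freeSV, Δ.sv x = (m.pS x, m.rS x)) ∧
  (∀ x ∈ p.freeEV, Δ.ev x = m.ev x)

/-! The inference rules mirror the typing rules one for one, with the types that the basis assigns
to variables replaced by type variables. Hence the type mapping that reads every type variable off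
`Δ` evaluates each inferred formal type to the derived type, and each generated constraint becomes
exactly the side condition (compatibility or `R' ⊆ P`) of the corresponding typing rule. -/

def TMap.ofBasis {BT : Type} (Δ : CLSBasis BT) : TMap BT :=
  ⟨Δ.ev, fun x => (Δ.sv x).1, fun x => (Δ.sv x).2,
    fun X => (Δ.tv X).1, fun X => (Δ.tv X).2⟩

def TE.evalTy {BT : Type} (Req : BT → Set BT) (m : TMap BT) (ty : TE BT × TE BT) :
    Set BT × Set BT :=
  (ty.1.eval Req m, ty.2.eval Req m)

section Completeness

variable {El BT : Type} {Γ : El → BT} {Req Exc : BT → Set BT} {Δ : CLSBasis BT}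

theorem TE.evalTy_fconj (m : TMap BT) (ty ty' : TE BT × TE BT) :
    TE.evalTy Req m (fconj ty ty') = conj (TE.evalTy Req m ty) (TE.evalTy Req m ty') :=
  rfl

theorem extendsOn_ofBasis (p : Pat El) : ExtendsOn (TMap.ofBasis Δ) Δ p :=
  ⟨fun _ _ => rfl, fun _ _ => rfl, fun _ _ => rfl⟩

theorem SPatTy.exists_sInf {s : SPat El} {ty : Set BT × Set BT}
    (h : SPatTy Γ Req Exc Δ s ty) :
    ∃ (fty : TE BT × TE BT) (Ξ : List (Constr BT)), SInf Γ Req s fty Ξ ∧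
      (∀ c ∈ Ξ, Satisfies Req Exc (TMap.ofBasis Δ) c) ∧
      TE.evalTy Req (TMap.ofBasis Δ) fty = ty := by
  induction h with
  | eps => exact ⟨_, _, .eps, by simp, rfl⟩
  | elem a => exact ⟨_, _, .elem a, by simp, rfl⟩
  | svar x => exact ⟨_, _, .svar x, by simp, rfl⟩
  | evar x => exact ⟨_, _, .evar x, by simp, rfl⟩
  | cat _ _ hc ih₁ ih₂ =>
    obtain ⟨fty₁, Ξ₁, hi₁, hs₁, rfl⟩ := ih₁
    obtain ⟨fty₂, Ξ₂, hi₂, hs₂, rfl⟩ := ih₂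
    exact ⟨_, _, .cat hi₁ hi₂,
      List.forall_mem_cons.2 ⟨hc, List.forall_mem_append.2 ⟨hs₁, hs₂⟩⟩,
      TE.evalTy_fconj _ _ _⟩

theorem PatTy.exists_pInf {p : Pat El} {ty : Set BT × Set BT}
    (h : PatTy Γ Req Exc Δ p ty) :
    ∃ (fty : TE BT × TE BT) (Ξ : List (Constr BT)), PInf Γ Req p fty Ξ ∧
      (∀ c ∈ Ξ, Satisfies Req Exc (TMap.ofBasis Δ) c) ∧
      TE.evalTy Req (TMap.ofBasis Δ) fty = ty := by
  induction h with
  | sp hs =>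
    obtain ⟨fty, Ξ, hi, hsat, hty⟩ := hs.exists_sInf
    exact ⟨fty, Ξ, .sp hi, hsat, hty⟩
  | tvar X => exact ⟨_, _, .tvar X, by simp, rfl⟩
  | par _ _ hc ih₁ ih₂ =>
    obtain ⟨fty₁, Ξ₁, hi₁, hs₁, rfl⟩ := ih₁
    obtain ⟨fty₂, Ξ₂, hi₂, hs₂, rfl⟩ := ih₂
    exact ⟨_, _, .par hi₁ hi₂,
      List.forall_mem_cons.2 ⟨hc, List.forall_mem_append.2 ⟨hs₁, hs₂⟩⟩,
      TE.evalTy_fconj _ _ _⟩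
  | loop hs _ hc hsub ih =>
    obtain ⟨fty, Ξ, hi, hsat, rfl⟩ := hs.exists_sInf
    obtain ⟨fty', Ξ', hi', hsat', rfl⟩ := ih
    exact ⟨_, _, .loop hi hi',
      List.forall_mem_cons.2 ⟨hc, List.forall_mem_cons.2
        ⟨hsub, List.forall_mem_append.2 ⟨hsat, hsat'⟩⟩⟩,
      rfl⟩

end Completeness

/-- completeness of type inference. -/
theorem inference_complete {El BT : Type} (Γ : El → BT) (Req Exc : BT → Set BT)
    (Δ : CLSBasis BT) (p : Pat El) (P R : Set BT)
    (h : PatTy Γ Req Exc Δ p (P, R)) :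
    ∃ (Φ Ψ : TE BT) (Ξ : List (Constr BT)), PInf Γ Req p (Φ, Ψ) Ξ ∧
      ∃ m : TMap BT, (∀ c ∈ Ξ, Satisfies Req Exc m c) ∧ ExtendsOn m Δ p ∧
        Φ.eval Req m = P ∧ Ψ.eval Req m = R := by
  obtain ⟨⟨Φ, Ψ⟩, Ξ, hinf, hsat, hty⟩ := h.exists_pInf
  obtain ⟨hΦ, hΨ⟩ := Prod.mk.inj hty
  exact ⟨Φ, Ψ, Ξ, hinf, TMap.ofBasis Δ, hsat, extendsOn_ofBasis p, hΦ, hΨ⟩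
end

section
/- The core of a context is well defined: every CLS context C with C ≢ □ admits exactly one decomposition among the shapes (i) C ≡ □ | T₁, (ii) C ≡ Loop(S₁) ⌋ (□ | T₁) | T₂, (iii) C = C₁[C₂] with C₂ ≡ Loop(S₂) ⌋ (Loop(S₁) ⌋ (□ | T₁) | T₂), so core(C) is a function of C (up to structural congruence). -/
/-- Structural congruence on sequences. -/
inductive SCong {El : Type} : CLSSeq El → CLSSeq El → Prop where
  | refl (s : CLSSeq El) : SCong s s
  | symm : SCong s₁ s₂ → SCong s₂ s₁
  | trans : SCong s₁ s₂ → SCong s₂ s₃ → SCong s₁ s₃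
  | assoc (s₁ s₂ s₃ : CLSSeq El) : SCong (.cat s₁ (.cat s₂ s₃)) (.cat (.cat s₁ s₂) s₃)
  | unitR (s : CLSSeq El) : SCong (.cat s .eps) s
  | unitL (s : CLSSeq El) : SCong (.cat .eps s) s
  | congCat : SCong s₁ s₁' → SCong s₂ s₂' → SCong (.cat s₁ s₂) (.cat s₁' s₂')

/-- Structural congruence on terms. -/
inductive TCong {El : Type} : CLSTerm El → CLSTerm El → Prop where
  | refl (t : CLSTerm El) : TCong t t
  | symm : TCong t₁ t₂ → TCong t₂ t₁
  | trans : TCong t₁ t₂ → TCong t₂ t₃ → TCong t₁ t₃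
  | seqCong : SCong s₁ s₂ → TCong (.seq s₁) (.seq s₂)
  | loopCong : SCong s₁ s₂ → TCong t₁ t₂ → TCong (.loop s₁ t₁) (.loop s₂ t₂)
  | parCong : TCong t₁ t₂ → TCong t₁' t₂' → TCong (.par t₁ t₁') (.par t₂ t₂')
  | parComm (t₁ t₂ : CLSTerm El) : TCong (.par t₁ t₂) (.par t₂ t₁)
  | parAssoc (t₁ t₂ t₃ : CLSTerm El) : TCong (.par t₁ (.par t₂ t₃)) (.par (.par t₁ t₂) t₃)
  | parUnit (t : CLSTerm El) : TCong (.par t (.seq .eps)) t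
  | loopEps : TCong (El := El) (.loop .eps (.seq .eps)) (.seq .eps)
  | rot (s₁ s₂ : CLSSeq El) (t : CLSTerm El) :
      TCong (.loop (.cat s₁ s₂) t) (.loop (.cat s₂ s₁) t)
/-- CLS contexts (exactly one hole). -/
inductive Ctx (El : Type) : Type where
  | hole : Ctx El
  | parL : Ctx El → CLSTerm El → Ctx El
  | parR : CLSTerm El → Ctx El → Ctx El
  | loop : CLSSeq El → Ctx El → Ctx El

/-- Filling the hole of a context with a term. -/
def Ctx.fill {El : Type} : Ctx El → CLSTerm El → CLSTerm El
  | .hole, T => T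
  | .parL C t, T => .par (C.fill T) t
  | .parR t C, T => .par t (C.fill T)
  | .loop s C, T => .loop s (C.fill T)

/-- Context composition: replace the hole of the first context by the second. -/
def Ctx.comp {El : Type} : Ctx El → Ctx El → Ctx El
  | .hole, C' => C'
  | .parL C t, C' => .parL (C.comp C') t
  | .parR t C, C' => .parR t (C.comp C')
  | .loop s C, C' => .loop s (C.comp C')

/-- Typing of a context whose hole is assumed to have type `hty`. -/
inductive CtxTy {El BT : Type} (Γ : El → BT) (Req Exc : BT → Set BT)
    (hty : Set BT × Set BT) : Ctx El → Set BT × Set BT → Prop where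
  | hole : CtxTy Γ Req Exc hty .hole hty
  | parL : CtxTy Γ Req Exc hty C ty → TermTy Γ Req Exc t ty' → Compat Exc ty ty' →
      CtxTy Γ Req Exc hty (.parL C t) (conj ty ty')
  | parR : TermTy Γ Req Exc t ty → CtxTy Γ Req Exc hty C ty' → Compat Exc ty ty' →
      CtxTy Γ Req Exc hty (.parR t C) (conj ty ty')
  | loop : SeqTy Γ Req Exc s ty → CtxTy Γ Req Exc hty C ty' → Compat Exc ty ty' →
      ty'.2 ⊆ ty.1 → CtxTy Γ Req Exc hty (.loop s C) (ty.1, ty.2 \ ty'.1)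

/-- A type `(P,R)` is OK for a context `C`:
filling the hole with a term of that type yields a correct system. -/
def OKfor {El BT : Type} (Γ : El → BT) (Req Exc : BT → Set BT)
    (ty : Set BT × Set BT) (C : Ctx El) : Prop :=
  ∃ P', CtxTy Γ Req Exc ty C (P', ∅)
/-- Structural congruence on contexts (the hole is treated as a fresh symbol). -/
inductive CtxCong {El : Type} : Ctx El → Ctx El → Prop where
  | refl (C : Ctx El) : CtxCong C C
  | symm : CtxCong C C' → CtxCong C' C
  | trans : CtxCong C C' → CtxCong C' C'' → CtxCong C C''
  | parLCong : CtxCong C C' → TCong t t' → CtxCong (.parL C t) (.parL C' t')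
  | parRCong : TCong t t' → CtxCong C C' → CtxCong (.parR t C) (.parR t' C')
  | loopCong : SCong s s' → CtxCong C C' → CtxCong (.loop s C) (.loop s' C')
  | parComm (C : Ctx El) (t : CLSTerm El) : CtxCong (.parL C t) (.parR t C)
  | parAssocL (C : Ctx El) (t₂ t₃ : CLSTerm El) :
      CtxCong (.parL (.parL C t₂) t₃) (.parL C (.par t₂ t₃))
  | parAssocR (t₁ t₂ : CLSTerm El) (C : Ctx El) :
      CtxCong (.parR (.par t₁ t₂) C) (.parR t₁ (.parR t₂ C))
  | parUnitL (C : Ctx El) : CtxCong (.parL C (.seq .eps)) C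
  | parUnitR (C : Ctx El) : CtxCong (.parR (.seq .eps) C) C

/-- Shape (i): `C ≡ □ | T₁`. -/
def Shape1 {El : Type} (C : Ctx El) : Prop :=
  ∃ t₁ : CLSTerm El, CtxCong C (.parL .hole t₁)

/-- Shape (ii): `C ≡ Loop(S₁) ⌋ (□ | T₁) | T₂`. -/
def Shape2 {El : Type} (C : Ctx El) : Prop :=
  ∃ (s₁ : CLSSeq El) (t₁ t₂ : CLSTerm El),
    CtxCong C (.parL (.loop s₁ (.parL .hole t₁)) t₂)

/-- Shape (iii): `C = C₁[C₂]` with `C₂ ≡ Loop(S₂) ⌋ (Loop(S₁) ⌋ (□ | T₁) | T₂)`. -/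
def Shape3Wit {El : Type} (C C₁ C₂ : Ctx El) : Prop :=
  C = C₁.comp C₂ ∧
  ∃ (s₁ s₂ : CLSSeq El) (t₁ t₂ : CLSTerm El),
    CtxCong C₂ (.loop s₂ (.parL (.loop s₁ (.parL .hole t₁)) t₂))

def Shape3 {El : Type} (C : Ctx El) : Prop := ∃ C₁ C₂ : Ctx El, Shape3Wit C C₁ C₂


/-!
A context is determined up to `≡` by two pieces of data read off the path from the root to the
hole: the parallel composition `Ctx.outer` of the terms hanging off the path above its first
loop, and the list `Ctx.frames` recording, for every loop on the path, its sequence and the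
parallel composition of the terms hanging off the path directly inside it. Every rule of `≡`
preserves the number of frames and `Ctx.outer` up to `≡`, and every context is congruent to the
canonical context `Loop(S₁) ⌋ (⋯ Loop(Sₙ) ⌋ (□ | Tₙ) ⋯ | T₁) | T₀` built from these data. Hence
shapes (i), (ii), (iii) are exactly the contexts with `0`, `1` and at least `2` loops on the path,
and any core `C₂` is congruent to the canonical context of the last two frames of `C`.
-/

namespace Ctx

variable {El : Type}

def outer : Ctx El → CLSTerm El
  | .hole => .seq .eps
  | .parL C t => .par C.outer t
  | .parR t C => .par t C.outer
  | .loop _ _ => .seq .eps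

def frames : Ctx El → List (CLSSeq El × CLSTerm El)
  | .hole => []
  | .parL C _ => C.frames
  | .parR _ C => C.frames
  | .loop s C => (s, C.outer) :: C.frames

def ofFrames : List (CLSSeq El × CLSTerm El) → Ctx El
  | [] => .hole
  | (s, t) :: L => .loop s (.parL (ofFrames L) t)

theorem frames_length_eq_of_cong {C C' : Ctx El} (h : CtxCong C C') :
    C.frames.length = C'.frames.length := by
  induction h <;> simp_all [frames]

theorem outer_cong_of_cong {C C' : Ctx El} (h : CtxCong C C') : TCong C.outer C'.outer := by
  induction h with
  | refl => exact .refl _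
  | symm _ ih => exact .symm ih
  | trans _ _ ih ih' => exact .trans ih ih'
  | parLCong _ ht ih => exact .parCong ih ht
  | parRCong ht _ ih => exact .parCong ht ih
  | loopCong => exact .refl _
  | parComm => exact .parComm _ _
  | parAssocL => exact .symm (.parAssoc _ _ _)
  | parAssocR => exact .symm (.parAssoc _ _ _)
  | parUnitL => exact .parUnit _
  | parUnitR => exact .trans (.parComm _ _) (.parUnit _)

theorem cong_parL_ofFrames (C : Ctx El) : CtxCong C (.parL (ofFrames C.frames) C.outer) := by
  induction C with
  | hole => exact .symm (.parUnitL _)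
  | parL C t ih => exact .trans (.parLCong ih (.refl t)) (.parAssocL _ _ _)
  | parR t C ih =>
    have hswap : CtxCong (.parR t C) (.parL (.parL (ofFrames C.frames) C.outer) t) :=
      .trans (.symm (.parComm C t)) (.parLCong ih (.refl t))
    exact .trans hswap (.trans (.parAssocL _ _ _) (.parLCong (.refl _) (.parComm _ _)))
  | loop s C ih => exact .trans (.loopCong (.refl s) ih) (.symm (.parUnitL _))

theorem cong_ofFrames_of_outer_cong_eps {C : Ctx El} (h : TCong C.outer (.seq .eps)) :
    CtxCong C (ofFrames C.frames) :=
  .trans (cong_parL_ofFrames C) (.trans (.parLCong (.refl _) h) (.parUnitL _))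

theorem exists_frames_comp (C₁ C₂ : Ctx El) :
    ∃ P, (C₁.comp C₂).frames = P ++ C₂.frames := by
  induction C₁ with
  | hole => exact ⟨[], rfl⟩
  | parL C _ ih | parR _ C ih => exact ih
  | loop s C ih =>
    obtain ⟨P, hP⟩ := ih
    exact ⟨(s, (C.comp C₂).outer) :: P, by simp [comp, frames, hP]⟩

end Ctx

section Shapes

open Ctx

variable {El : Type}

theorem shape1_iff {C : Ctx El} : Shape1 C ↔ C.frames = [] := by
  constructor
  · rintro ⟨t, ht⟩
    simpa [frames] using frames_length_eq_of_cong ht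
  · intro hC
    have := cong_parL_ofFrames C
    rw [hC] at this
    exact ⟨_, this⟩

theorem shape2_iff {C : Ctx El} : Shape2 C ↔ C.frames.length = 1 := by
  constructor
  · rintro ⟨s, t₁, t₂, ht⟩
    simpa [frames] using frames_length_eq_of_cong ht
  · intro hC
    obtain ⟨⟨s, t⟩, hst⟩ := List.length_eq_one_iff.mp hC
    have := cong_parL_ofFrames C
    rw [hst] at this
    exact ⟨s, t, _, this⟩

theorem Shape3Wit.frames_length_core {C C₁ C₂ : Ctx El} (h : Shape3Wit C C₁ C₂) :
    C₂.frames.length = 2 := by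
  obtain ⟨-, s₁, s₂, t₁, t₂, hC₂⟩ := h
  simpa [frames] using frames_length_eq_of_cong hC₂

theorem Shape3Wit.cong_ofFrames_rtake {C C₁ C₂ : Ctx El} (h : Shape3Wit C C₁ C₂) :
    CtxCong C₂ (ofFrames (C.frames.rtake 2)) := by
  have hlen := h.frames_length_core
  obtain ⟨rfl, s₁, s₂, t₁, t₂, hC₂⟩ := h
  obtain ⟨P, hP⟩ := exists_frames_comp C₁ C₂
  have hrtake : (C₁.comp C₂).frames.rtake 2 = C₂.frames := by
    simp [List.rtake, hP, hlen]
  rw [hrtake]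
  exact cong_ofFrames_of_outer_cong_eps (outer_cong_of_cong hC₂)

theorem exists_eq_comp_loop_of_two_le {C : Ctx El} (h : 2 ≤ C.frames.length) :
    ∃ (C₁ : Ctx El) (s : CLSSeq El) (D : Ctx El),
      C = C₁.comp (.loop s D) ∧ D.frames.length = 1 := by
  induction C with
  | hole => simp [frames] at h
  | parL C t ih =>
    obtain ⟨C₁, s, D, rfl, hD⟩ := ih h
    exact ⟨.parL C₁ t, s, D, rfl, hD⟩
  | parR t C ih =>
    obtain ⟨C₁, s, D, rfl, hD⟩ := ih h
    exact ⟨.parR t C₁, s, D, rfl, hD⟩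
  | loop s C ih =>
    simp only [frames, List.length_cons] at h
    by_cases hC : C.frames.length = 1
    · exact ⟨.hole, s, C, rfl, hC⟩
    · obtain ⟨C₁, s', D, rfl, hD⟩ := ih (by omega)
      exact ⟨.loop s C₁, s', D, rfl, hD⟩

theorem shape3_iff {C : Ctx El} : Shape3 C ↔ 2 ≤ C.frames.length := by
  constructor
  · rintro ⟨C₁, C₂, h⟩
    obtain ⟨P, hP⟩ := exists_frames_comp C₁ C₂
    rw [h.1, hP, List.length_append, h.frames_length_core]
    omega
  · intro hC
    obtain ⟨C₁, s₂, D, hCD, hD⟩ := exists_eq_comp_loop_of_two_le hC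
    obtain ⟨⟨s₁, t₁⟩, hst⟩ := List.length_eq_one_iff.mp hD
    have hDcong := cong_parL_ofFrames D
    rw [hst] at hDcong
    exact ⟨C₁, _, hCD, s₁, s₂, t₁, D.outer, .loopCong (.refl s₂) hDcong⟩

end Shapes

theorem core_well_defined_general {El : Type} (C : Ctx El) :
    (Shape1 C ∨ Shape2 C ∨ Shape3 C) ∧
    ¬ (Shape1 C ∧ Shape2 C) ∧ ¬ (Shape1 C ∧ Shape3 C) ∧ ¬ (Shape2 C ∧ Shape3 C) ∧
    (∀ C₁ C₂ C₁' C₂' : Ctx El, Shape3Wit C C₁ C₂ → Shape3Wit C C₁' C₂' →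
      CtxCong C₂ C₂') := by
  simp only [shape1_iff, shape2_iff, shape3_iff, ← List.length_eq_zero_iff]
  refine ⟨by omega, by omega, by omega, by omega, fun _ _ _ _ h h' => ?_⟩
  exact .trans h.cong_ofFrames_rtake (.symm h'.cong_ofFrames_rtake)

/-- the core of a context is well defined: every context (other
than the hole) admits exactly one of the three decompositions, and in the third
case the core `C₂` is unique up to structural congruence. -/
theorem core_well_defined {El : Type} (C : Ctx El) (h : ¬ CtxCong C .hole) :
    (Shape1 C ∨ Shape2 C ∨ Shape3 C) ∧
    ¬ (Shape1 C ∧ Shape2 C) ∧ ¬ (Shape1 C ∧ Shape3 C) ∧ ¬ (Shape2 C ∧ Shape3 C) ∧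
    (∀ C₁ C₂ C₁' C₂' : Ctx El, Shape3Wit C C₁ C₂ → Shape3Wit C C₁' C₂' →
      CtxCong C₂ C₂') :=
  core_well_defined_general C
end

section
/- If (P,R) and (P',R') are compatible well-formed types and additionally R' ⊆ P, then the type (P, R \ P') produced by the loop typing rule is well formed. -/
theorem WF.mono_right {BT : Type} {E : BT → Set BT} {P R S : Set BT}
    (h : WF E (P, R)) (hSR : S ⊆ R) : WF E (P, S) :=
  ⟨h.1, Set.subset_eq_empty (Set.inter_subset_inter_right P hSR) h.2.1,
    Set.subset_eq_empty (Set.inter_subset_inter_left _ hSR) h.2.2⟩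

theorem loop_rule_wellFormed_general {BT : Type} (E : BT → Set BT)
    (P R P' : Set BT) (hwf : WF E (P, R)) :
    WF E (P, R \ P') :=
  hwf.mono_right Set.sdiff_subset

/-- the type produced by the loop typing rule is well formed. -/
theorem loop_rule_wellFormed {BT : Type} (E : BT → Set BT) (hE : ∀ t, t ∉ E t)
    (P R P' R' : Set BT) (hwf : WF E (P, R)) (hwf' : WF E (P', R'))
    (hcomp : Compat E (P, R) (P', R')) (hsub : R' ⊆ P) :
    WF E (P, R \ P') :=
  loop_rule_wellFormed_general E P R P' hwf
end
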